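/- For ρ > 0, the function Ξ_ρ(s) = ∫₀^∞ t^(s/2-1) Ψ(t) e^{-ρ log²(t)} dt, viewed as a smooth function of (ρ, s) with s real (or as a holomorphic function of s for fixed ρ), satisfies the heat equation ∂_ρ Ξ_ρ(s) + 4·∂²_s Ξ_ρ(s) = 0. -/

import Mathlib

/-!
`Ξ_ρ(s)` is the Mellin transform, at `s / 2`, of `g_ρ(t) = e^{-ρ log² t} Ψ(t)`. Since
`Ψ(t) ≤ 1 / (π t)` and `e^{-ρ log² t} ≤ e^{a² / 4ρ} t^a` for every real `a`, each
`(log t)^k g_ρ(t)` is `O(t^a)` for all `a` at both `0` and `∞`, so its Mellin transform is entire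
and can be differentiated under the integral sign: `∂_s` brings down a factor `(log t) / 2` and
`∂_ρ` a factor `-log² t`, whence `∂_ρ Ξ = -4 ∂_s² Ξ`.
-/

open MeasureTheory Real Filter

noncomputable def Psi (t : ℝ) : ℝ := ∑' n : ℕ, Real.exp (-Real.pi * ((n : ℝ) + 1) ^ 2 * t)

noncomputable def Xi (ρ : ℝ) (s : ℂ) : ℂ :=
  ∫ t in Set.Ioi (0:ℝ), (t : ℂ) ^ (s / 2 - 1) * (Psi t : ℂ) * (Real.exp (-ρ * Real.log t ^ 2) : ℂ)

open Set Asymptotics Topology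

lemma eventually_pos_atTop_sup_nhdsGT : ∀ᶠ t : ℝ in atTop ⊔ 𝓝[>] 0, 0 < t :=
  eventually_sup.2 ⟨eventually_gt_atTop 0, self_mem_nhdsWithin⟩

lemma isBigO_atTop_sup_nhdsGT_of_le {E F : Type*} [Norm E] [Norm F] {f : ℝ → E} {g : ℝ → F}
    {C : ℝ} (h : ∀ t > 0, ‖f t‖ ≤ C * ‖g t‖) : f =O[atTop ⊔ 𝓝[>] 0] g :=
  IsBigO.of_bound C (eventually_pos_atTop_sup_nhdsGT.mono h)

def RapidDecay {E : Type*} [Norm E] (f : ℝ → E) : Prop :=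
  ∀ a : ℝ, f =O[atTop ⊔ 𝓝[>] 0] (· ^ a)

section RapidDecay

variable {E : Type*} [NormedAddCommGroup E] [NormedSpace ℂ E] {f : ℝ → E}

lemma RapidDecay.log_smul (hf : RapidDecay f) : RapidDecay (fun t => log t • f t) := by
  intro a
  have htop := isBigO_rpow_top_log_smul (a := 1 - a) (b := -a) (by linarith)
    (by simpa only [neg_sub] using (isBigO_sup.1 (hf (a - 1))).1)
  have hbot := isBigO_rpow_zero_log_smul (a := -a - 1) (b := -a) (by linarith)
    (by simpa only [neg_sub, sub_neg_eq_add, add_comm] using (isBigO_sup.1 (hf (a + 1))).2)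
  simp only [neg_neg] at htop hbot
  exact isBigO_sup.2 ⟨htop, hbot⟩

lemma RapidDecay.smul_isBigO {k : ℝ → ℝ} {b : ℝ} (hk : RapidDecay k)
    (hf : f =O[atTop ⊔ 𝓝[>] 0] (· ^ b)) : RapidDecay (fun t => k t • f t) := fun a =>
  ((hk (a - b)).smul hf).congr' (.of_forall fun _ => rfl)
    (eventually_pos_atTop_sup_nhdsGT.mono fun t ht => by
      simp only [smul_eq_mul, ← rpow_add ht, sub_add_cancel])

lemma RapidDecay.mellinConvergent (hfc : LocallyIntegrableOn f (Ioi 0)) (hf : RapidDecay f)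
    (s : ℂ) : MellinConvergent f s :=
  mellinConvergent_of_isBigO_rpow hfc (isBigO_sup.1 (hf _)).1 (lt_add_one s.re)
    (isBigO_sup.1 (hf (-(s.re - 1)))).2 (sub_one_lt s.re)

lemma RapidDecay.hasDerivAt_mellin (hfc : LocallyIntegrableOn f (Ioi 0)) (hf : RapidDecay f)
    (s : ℂ) : HasDerivAt (mellin f) (mellin (fun t => log t • f t) s) s :=
  (mellin_hasDerivAt_of_isBigO_rpow hfc (isBigO_sup.1 (hf _)).1 (lt_add_one s.re)
    (isBigO_sup.1 (hf (-(s.re - 1)))).2 (sub_one_lt s.re)).2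

lemma locallyIntegrableOn_log_smul (hfc : LocallyIntegrableOn f (Ioi 0)) :
    LocallyIntegrableOn (fun t => log t • f t) (Ioi 0) :=
  LocallyIntegrableOn.continuousOn_smul isOpen_Ioi.isLocallyClosed
    hfc (continuousOn_log.mono fun _ ht => (ne_of_gt ht))

lemma RapidDecay.hasDerivAt_mellin_div_two (hfc : LocallyIntegrableOn f (Ioi 0))
    (hf : RapidDecay f) (s : ℂ) :
    HasDerivAt (fun z => mellin f (z / 2))
      ((1 / 2 : ℂ) • mellin (fun t => log t • f t) (s / 2)) s := by
  exact (hf.hasDerivAt_mellin hfc (s / 2)).scomp s ((hasDerivAt_id' s).div_const 2)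

lemma RapidDecay.iteratedDeriv_two_mellin_div_two (hfc : LocallyIntegrableOn f (Ioi 0))
    (hf : RapidDecay f) (s : ℂ) :
    iteratedDeriv 2 (fun z => mellin f (z / 2)) s
      = (1 / 4 : ℂ) • mellin (fun t => log t • log t • f t) (s / 2) := by
  have hderiv : deriv (fun z => mellin f (z / 2))
      = fun z => (1 / 2 : ℂ) • mellin (fun t => log t • f t) (z / 2) :=
    funext fun z => (hf.hasDerivAt_mellin_div_two hfc z).deriv
  rw [iteratedDeriv_succ, iteratedDeriv_one, hderiv]
  refine (((hf.log_smul.hasDerivAt_mellin_div_two (locallyIntegrableOn_log_smul hfc) s).const_smul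
    (1 / 2 : ℂ)).deriv).trans ?_
  rw [smul_smul]
  norm_num

end RapidDecay

lemma exp_neg_mul_log_sq_le {r t : ℝ} (hr : 0 < r) (ht : 0 < t) (a : ℝ) :
    exp (-r * log t ^ 2) ≤ exp (a ^ 2 / (4 * r)) * t ^ a := by
  rw [rpow_def_of_pos ht, ← exp_add, exp_le_exp, div_add' _ _ _ (by positivity),
    le_div_iff₀ (by positivity)]
  nlinarith [sq_nonneg (2 * r * log t + a)]

lemma rapidDecay_exp_neg_mul_log_sq {r : ℝ} (hr : 0 < r) :
    RapidDecay (fun t => exp (-r * log t ^ 2)) := fun a =>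
  isBigO_atTop_sup_nhdsGT_of_le fun t ht => by
    simpa [abs_of_pos (rpow_pos_of_pos ht a)] using exp_neg_mul_log_sq_le hr ht a

section LogGaussDamping

variable {E : Type*} [NormedAddCommGroup E] [NormedSpace ℂ E] {f : ℝ → E}

noncomputable def logGaussDamping (f : ℝ → E) (ρ t : ℝ) : E := exp (-ρ * log t ^ 2) • f t

lemma rapidDecay_logGaussDamping {b ρ : ℝ} (hf : f =O[atTop ⊔ 𝓝[>] 0] (· ^ b))
    (hρ : 0 < ρ) :
    RapidDecay (logGaussDamping f ρ) :=
  (rapidDecay_exp_neg_mul_log_sq hρ).smul_isBigO hf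

lemma locallyIntegrableOn_logGaussDamping (hfc : LocallyIntegrableOn f (Ioi 0)) (ρ : ℝ) :
    LocallyIntegrableOn (logGaussDamping f ρ) (Ioi 0) :=
  LocallyIntegrableOn.continuousOn_smul isOpen_Ioi.isLocallyClosed hfc <|
    ((continuousOn_log.mono fun _ ht => ne_of_gt ht).pow 2).const_smul (-ρ) |>.rexp

lemma hasDerivAt_logGaussDamping (f : ℝ → E) (ρ t : ℝ) :
    HasDerivAt (fun r => logGaussDamping f r t)
      (-(log t • log t • logGaussDamping f ρ t)) ρ := by
  refine ((((hasDerivAt_id ρ).neg.mul_const (log t ^ 2)).exp).smul_const (f t)).congr_deriv ?_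
  simp only [logGaussDamping, smul_smul, ← neg_smul, Pi.neg_apply, id_eq]
  ring_nf

lemma hasDerivAt_mellin_logGaussDamping {b ρ : ℝ} (hfc : LocallyIntegrableOn f (Ioi 0))
    (hf : f =O[atTop ⊔ 𝓝[>] 0] (· ^ b)) (hρ : 0 < ρ) (s : ℂ) :
    HasDerivAt (fun r => mellin (logGaussDamping f r) s)
      (-mellin (fun t => log t • log t • logGaussDamping f ρ t) s) ρ := by
  have hconv {r : ℝ} (hr : 0 < r) : MellinConvergent (logGaussDamping f r) s :=
    (rapidDecay_logGaussDamping hf hr).mellinConvergent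
      (locallyIntegrableOn_logGaussDamping hfc r) s
  have hconv₂ {r : ℝ} (hr : 0 < r) :
      MellinConvergent (fun t => log t • log t • logGaussDamping f r t) s :=
    (rapidDecay_logGaussDamping hf hr).log_smul.log_smul.mellinConvergent
      (locallyIntegrableOn_log_smul <| locallyIntegrableOn_log_smul <|
        locallyIntegrableOn_logGaussDamping hfc r) s
  have h_bound : ∀ᵐ (t : ℝ) ∂(volume.restrict (Ioi 0)), ∀ r ∈ Metric.ball ρ (ρ / 2),
      ‖-((t : ℂ) ^ (s - 1) • log t • log t • logGaussDamping f r t)‖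
        ≤ ‖(t : ℂ) ^ (s - 1) • log t • log t • logGaussDamping f (ρ / 2) t‖ := by
    refine .of_forall fun t r hmem => ?_
    have hr : ρ / 2 < r := by
      linarith [(abs_lt.1 (mem_ball_iff_norm.1 hmem)).1]
    simp only [norm_neg, norm_smul, logGaussDamping, Real.norm_eq_abs, abs_exp]
    gcongr
  obtain ⟨-, h⟩ := hasDerivAt_integral_of_dominated_loc_of_deriv_le
    (Metric.ball_mem_nhds ρ (half_pos hρ))
    ((eventually_gt_nhds hρ).mono fun r hr => (hconv hr).aestronglyMeasurable) (hconv hρ)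
    (hconv₂ hρ).aestronglyMeasurable.neg h_bound (hconv₂ (half_pos hρ)).norm
    (.of_forall fun t r _ => by
      have := (hasDerivAt_logGaussDamping f r t).const_smul ((t : ℂ) ^ (s - 1))
      rw [smul_neg] at this
      exact this)
  simpa only [mellin, integral_neg] using h

theorem heat_equation_mellin_logGaussDamping {b ρ : ℝ} (hfc : LocallyIntegrableOn f (Ioi 0))
    (hf : f =O[atTop ⊔ 𝓝[>] 0] (· ^ b)) (hρ : 0 < ρ) (s : ℂ) :
    deriv (fun r => mellin (logGaussDamping f r) (s / 2)) ρ
      + (4 : ℂ) • iteratedDeriv 2 (fun z => mellin (logGaussDamping f ρ) (z / 2)) s = 0 := by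
  rw [(hasDerivAt_mellin_logGaussDamping hfc hf hρ (s / 2)).deriv,
    (rapidDecay_logGaussDamping hf hρ).iteratedDeriv_two_mellin_div_two
      (locallyIntegrableOn_logGaussDamping hfc ρ) s, smul_smul]
  norm_num

end LogGaussDamping

lemma exp_neg_pi_mul_succ_sq_le {a t : ℝ} (ha : 0 ≤ a) (hat : a ≤ t) (n : ℕ) :
    exp (-π * ((n : ℝ) + 1) ^ 2 * t) ≤ exp (-π * a) ^ (n + 1) := by
  rw [← exp_nat_mul, exp_le_exp]
  push_cast
  have h : ((n : ℝ) + 1) * a ≤ ((n : ℝ) + 1) ^ 2 * t := by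
    nlinarith [mul_le_mul_of_nonneg_left hat (by positivity : (0 : ℝ) ≤ n + 1),
      mul_nonneg (mul_nonneg n.cast_nonneg (by positivity : (0 : ℝ) ≤ n + 1)) (ha.trans hat)]
  nlinarith [mul_le_mul_of_nonneg_left h pi_pos.le]

lemma summable_exp_neg_pi_mul_pow_succ {a : ℝ} (ha : 0 < a) :
    Summable (fun n : ℕ => exp (-π * a) ^ (n + 1)) :=
  (summable_nat_add_iff 1).2 <| summable_geometric_of_lt_one (exp_pos _).le <|
    exp_lt_one_iff.2 (by nlinarith [pi_pos])

lemma psi_nonneg (t : ℝ) : 0 ≤ Psi t :=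
  tsum_nonneg fun _ => (exp_pos _).le

lemma psi_le {t : ℝ} (ht : 0 < t) : Psi t ≤ (π * t)⁻¹ := by
  set q := exp (-π * t)
  have hq1 : q < 1 := exp_lt_one_iff.2 (by nlinarith [pi_pos])
  have hgeom : Psi t ≤ ∑' n : ℕ, q ^ (n + 1) :=
    Summable.tsum_le_tsum (exp_neg_pi_mul_succ_sq_le ht.le le_rfl)
      ((summable_exp_neg_pi_mul_pow_succ ht).of_nonneg_of_le (fun _ => (exp_pos _).le)
        (exp_neg_pi_mul_succ_sq_le ht.le le_rfl))
      (summable_exp_neg_pi_mul_pow_succ ht)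
  have hsum : ∑' n : ℕ, q ^ (n + 1) = q / (1 - q) := by
    simp_rw [pow_succ']
    rw [tsum_mul_left, tsum_geometric_of_lt_one (exp_pos _).le hq1, div_eq_mul_inv]
  have hkey : q * (π * t + 1) ≤ 1 := by
    calc q * (π * t + 1) ≤ q * exp (π * t) := by gcongr; exact add_one_le_exp _
      _ = 1 := by rw [← exp_add]; simp
  calc Psi t ≤ q / (1 - q) := hsum ▸ hgeom
    _ ≤ (π * t)⁻¹ := by
      rw [div_le_iff₀ (sub_pos.2 hq1), inv_mul_eq_div, le_div_iff₀ (by positivity)]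
      linarith

lemma continuousOn_psi : ContinuousOn Psi (Ioi 0) := by
  refine continuousOn_of_forall_continuousAt fun t ht => ?_
  have ha : 0 < t / 2 := half_pos ht
  have hcont : ContinuousOn Psi (Ioi (t / 2)) :=
    continuousOn_tsum (fun n => by fun_prop) (summable_exp_neg_pi_mul_pow_succ ha)
      fun n x hx => by
        rw [norm_of_nonneg (exp_pos _).le]
        exact exp_neg_pi_mul_succ_sq_le ha.le (le_of_lt hx) n
  exact hcont.continuousAt (Ioi_mem_nhds (half_lt_self ht))

lemma isBigO_psi : (fun t => (Psi t : ℂ)) =O[atTop ⊔ 𝓝[>] 0] (· ^ (-1 : ℝ)) :=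
  isBigO_atTop_sup_nhdsGT_of_le (C := π⁻¹) fun t ht => by
    rw [Complex.norm_real, norm_of_nonneg (psi_nonneg t), norm_of_nonneg (rpow_nonneg ht.le _),
      rpow_neg_one, ← mul_inv]
    exact psi_le ht

lemma xi_eq_mellin (ρ : ℝ) (s : ℂ) :
    Xi ρ s = mellin (logGaussDamping (fun t => (Psi t : ℂ)) ρ) (s / 2) := by
  simp only [Xi, mellin, logGaussDamping, Complex.real_smul, smul_eq_mul]
  congr 1
  ext t
  ring

theorem stmt4 (ρ : ℝ) (hρ : 0 < ρ) (s : ℂ) :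
    deriv (fun r : ℝ => Xi r s) ρ + 4 * iteratedDeriv 2 (fun z : ℂ => Xi ρ z) s = 0 := by
  simp only [xi_eq_mellin]
  exact heat_equation_mellin_logGaussDamping
    ((Complex.continuous_ofReal.comp_continuousOn continuousOn_psi).locallyIntegrableOn
      measurableSet_Ioi) isBigO_psi hρ s
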